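/- arXiv:2409.19659 — 2 statements merged into one kernel-verified Lean document; each statement's English description precedes it below -/
import Mathlib

section
/- Let x_1, …, x_N ∈ ℝ^d with N ≥ 1 and β > 0, and define the Hopfield energy E(ξ) = ½·⟨ξ, ξ⟩ − β⁻¹·log(∑_{i=1}^N exp(β·⟨x_i, ξ⟩)). Then for every ξ ∈ ℝ^d, the updated state ξ' = ∑_{i=1}^N softmax(β·Xᵀξ)_i · x_i satisfies E(ξ') ≤ E(ξ); i.e., the Hopfield update rule never increases the energy. -/
/-!
The log-sum-exp part of the energy is convex in `ξ`, and its gradient at `ξ` is exactly the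
softmax-weighted mean `ξ'` of the patterns. Hence it lies above its tangent at `ξ`, which bounds
`E ξ' - E ξ` by `-½ ⟪ξ' - ξ, ξ' - ξ⟫ ≤ 0`.
-/

open scoped RealInnerProductSpace

open Real Finset

noncomputable def softmax {ι : Type*} [Fintype ι] (a : ι → ℝ) (i : ι) : ℝ :=
  exp (a i) / ∑ j, exp (a j)

section Softmax

variable {ι : Type*} [Fintype ι]

theorem softmax_nonneg (a : ι → ℝ) (i : ι) : 0 ≤ softmax a i := by
  unfold softmax; positivity

theorem sum_softmax [Nonempty ι] (a : ι → ℝ) : ∑ i, softmax a i = 1 := by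
  simp only [softmax, ← sum_div]
  exact div_self (sum_pos (fun i _ => exp_pos (a i)) univ_nonempty).ne'

/-- The tangent inequality for the convex function `log ∑ exp`, whose gradient at `a` is
`softmax a`. -/
theorem log_sum_exp_add_sum_softmax_mul_sub_le (a b : ι → ℝ) :
    log (∑ i, exp (a i)) + ∑ i, softmax a i * (b i - a i) ≤ log (∑ i, exp (b i)) := by
  rcases isEmpty_or_nonempty ι with hι | hι
  · simp
  have hS : 0 < ∑ i, exp (a i) := sum_pos (fun i _ => exp_pos (a i)) univ_nonempty
  have jensen : exp (∑ i, softmax a i * (b i - a i)) ≤ ∑ i, softmax a i * exp (b i - a i) :=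
    convexOn_exp.map_sum_le (fun i _ => softmax_nonneg a i) (sum_softmax a)
      (fun i _ => Set.mem_univ _)
  have reweight : ∑ i, softmax a i * exp (b i - a i) = (∑ i, exp (b i)) / ∑ i, exp (a i) := by
    rw [sum_div]
    refine sum_congr rfl fun i _ => ?_
    rw [softmax, exp_sub]
    field_simp
  rw [← le_sub_iff_add_le', ← log_div (by positivity) hS.ne', le_log_iff_exp_le (by positivity)]
  exact jensen.trans reweight.le

end Softmax

theorem hopfield_update_energy_descent_general
    (N d : ℕ) (β : ℝ) (hβ : 0 < β)
    (x : Fin N → EuclideanSpace ℝ (Fin d))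
    (E : EuclideanSpace ℝ (Fin d) → ℝ)
    (hE : E = fun ξ =>
      (1 / 2) * ⟪ξ, ξ⟫ - β⁻¹ * Real.log (∑ i, Real.exp (β * ⟪x i, ξ⟫))) :
    ∀ ξ : EuclideanSpace ℝ (Fin d),
      E (∑ i, (Real.exp (β * ⟪x i, ξ⟫) /
          ∑ m, Real.exp (β * ⟪x m, ξ⟫)) • x i) ≤ E ξ := by
  intro ξ
  set a : Fin N → ℝ := fun i => β * ⟪x i, ξ⟫
  change E (∑ i, softmax a i • x i) ≤ E ξ
  set ξ' := ∑ i, softmax a i • x i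
  have inner_update (v : EuclideanSpace ℝ (Fin d)) : ⟪ξ', v⟫ = ∑ i, softmax a i * ⟪x i, v⟫ := by
    simp only [ξ', sum_inner, real_inner_smul_left]
  have tangent := log_sum_exp_add_sum_softmax_mul_sub_le a (fun i => β * ⟪x i, ξ'⟫)
  have linear_term : ∑ i, softmax a i * (β * ⟪x i, ξ'⟫ - a i) = β * ⟪ξ', ξ' - ξ⟫ := by
    simp only [inner_update, a, inner_sub_right, mul_sum]
    exact sum_congr rfl fun i _ => by ring
  rw [linear_term] at tangent
  have scaled := mul_le_mul_of_nonneg_left tangent (inv_nonneg.2 hβ.le)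
  rw [mul_add, inv_mul_cancel_left₀ hβ.ne', inner_sub_right] at scaled
  have dist_sq : 0 ≤ ⟪ξ' - ξ, ξ' - ξ⟫ := real_inner_self_nonneg
  rw [inner_sub_sub_self, real_inner_comm ξ' ξ] at dist_sq
  subst hE
  show 1 / 2 * ⟪ξ', ξ'⟫ - β⁻¹ * log (∑ i, exp (β * ⟪x i, ξ'⟫))
    ≤ 1 / 2 * ⟪ξ, ξ⟫ - β⁻¹ * log (∑ i, exp (a i))
  linarith

/-- The Hopfield update rule never increases the energy
`E(ξ) = ½·⟨ξ,ξ⟩ − β⁻¹·log(∑ᵢ exp(β·⟨xᵢ,ξ⟩))`: for every `ξ`, the updated state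
`ξ' = ∑ᵢ softmax(β·Xᵀξ)ᵢ • xᵢ` satisfies `E(ξ') ≤ E(ξ)`. -/
theorem hopfield_update_energy_descent
    (N d : ℕ) (hN : 1 ≤ N) (β : ℝ) (hβ : 0 < β)
    (x : Fin N → EuclideanSpace ℝ (Fin d))
    (E : EuclideanSpace ℝ (Fin d) → ℝ)
    (hE : E = fun ξ =>
      (1 / 2) * ⟪ξ, ξ⟫ - β⁻¹ * Real.log (∑ i, Real.exp (β * ⟪x i, ξ⟫))) :
    ∀ ξ : EuclideanSpace ℝ (Fin d),
      E (∑ i, (Real.exp (β * ⟪x i, ξ⟫) /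
          ∑ m, Real.exp (β * ⟪x m, ξ⟫)) • x i) ≤ E ξ :=
  hopfield_update_energy_descent_general N d β hβ x E hE
end

section
/- Let x_1, …, x_N ∈ ℝ^d with N ≥ 1, β > 0, and E(ξ) = ½·⟨ξ, ξ⟩ − β⁻¹·log(∑_{i=1}^N exp(β·⟨x_i, ξ⟩)). Then ξ ∈ ℝ^d is a stationary point of E (i.e., ∇E(ξ) = 0) if and only if ξ is a fixed point of the Hopfield update rule, i.e., ξ = ∑_{i=1}^N softmax(β·Xᵀξ)_i · x_i. -/
/-!
The energy is `½‖ξ‖²` minus the log-sum-exp smoothed maximum `β⁻¹ log ∑ᵢ exp (β ⟪xᵢ, ξ⟫)`, whose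
gradient is the softmax average `∑ᵢ softmax(β Xᵀξ)ᵢ xᵢ` of the patterns. Hence
`∇E(ξ) = ξ - ∑ᵢ softmax(β Xᵀξ)ᵢ xᵢ`, which vanishes exactly at the fixed points of the update rule.
-/

open scoped RealInnerProductSpace

section GradientCalculus

variable {F : Type*} [NormedAddCommGroup F] [InnerProductSpace ℝ F] [CompleteSpace F]
  {f g : F → ℝ} {f' g' x : F}

theorem HasGradientAt.sub (hf : HasGradientAt f f' x) (hg : HasGradientAt g g' x) :
    HasGradientAt (fun y => f y - g y) (f' - g') x := by
  rw [hasGradientAt_iff_hasFDerivAt, map_sub]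
  exact hf.hasFDerivAt.sub hg.hasFDerivAt

theorem HasGradientAt.const_mul (hf : HasGradientAt f f' x) (c : ℝ) :
    HasGradientAt (fun y => c * f y) (c • f') x := by
  rw [hasGradientAt_iff_hasFDerivAt, map_smulₛₗ, RCLike.conj_to_real]
  exact hf.hasFDerivAt.const_mul c

theorem HasGradientAt.fun_sum {ι : Type*} {u : Finset ι} {A : ι → F → ℝ} {A' : ι → F}
    (h : ∀ i ∈ u, HasGradientAt (A i) (A' i) x) :
    HasGradientAt (fun y => ∑ i ∈ u, A i y) (∑ i ∈ u, A' i) x := by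
  rw [hasGradientAt_iff_hasFDerivAt, map_sum]
  exact HasFDerivAt.fun_sum fun i hi => (h i hi).hasFDerivAt

theorem HasDerivAt.comp_hasGradientAt {h : ℝ → ℝ} {h' : ℝ} (hh : HasDerivAt h h' (f x))
    (hf : HasGradientAt f f' x) : HasGradientAt (fun y => h (f y)) (h' • f') x := by
  rw [hasGradientAt_iff_hasFDerivAt, map_smulₛₗ, RCLike.conj_to_real]
  exact hh.comp_hasFDerivAt x hf.hasFDerivAt

theorem hasGradientAt_inner_right (a : F) : HasGradientAt (fun y => ⟪a, y⟫) a x := by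
  rw [hasGradientAt_iff_hasFDerivAt]
  exact (innerSL ℝ a).hasFDerivAt

theorem hasGradientAt_norm_sq (x : F) : HasGradientAt (fun y => ‖y‖ ^ 2) ((2 : ℝ) • x) x := by
  rw [hasGradientAt_iff_hasFDerivAt, map_smulₛₗ, RCLike.conj_to_real, ofNat_smul_eq_nsmul]
  exact (hasStrictFDerivAt_norm_sq x).hasFDerivAt

theorem hasGradientAt_half_inner_self (x : F) :
    HasGradientAt (fun y => 1 / 2 * ⟪y, y⟫) x x := by
  simp_rw [real_inner_self_eq_norm_sq]
  convert (hasGradientAt_norm_sq x).const_mul (1 / 2) using 1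
  rw [smul_smul]
  norm_num

variable {ι : Type*} [Fintype ι]

theorem hasGradientAt_sum_exp_inner (x : ι → F) (β : ℝ) (ξ : F) :
    HasGradientAt (fun z => ∑ i, Real.exp (β * ⟪x i, z⟫))
      (∑ i, (Real.exp (β * ⟪x i, ξ⟫) * β) • x i) ξ := by
  refine HasGradientAt.fun_sum fun i _ => ?_
  rw [mul_smul]
  exact (Real.hasDerivAt_exp _).comp_hasGradientAt ((hasGradientAt_inner_right (x i)).const_mul β)

theorem hasGradientAt_inv_mul_log_sum_exp_inner [Nonempty ι] (x : ι → F) {β : ℝ} (hβ : β ≠ 0)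
    (ξ : F) :
    HasGradientAt (fun z => β⁻¹ * Real.log (∑ i, Real.exp (β * ⟪x i, z⟫)))
      (∑ i, (Real.exp (β * ⟪x i, ξ⟫) / ∑ m, Real.exp (β * ⟪x m, ξ⟫)) • x i) ξ := by
  have hpos : 0 < ∑ m, Real.exp (β * ⟪x m, ξ⟫) :=
    Finset.sum_pos (fun i _ => Real.exp_pos _) Finset.univ_nonempty
  convert (((Real.hasDerivAt_log hpos.ne').comp_hasGradientAt
    (f := fun z => ∑ i, Real.exp (β * ⟪x i, z⟫))
    (hasGradientAt_sum_exp_inner x β ξ)).const_mul β⁻¹) using 1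
  simp only [Finset.smul_sum, smul_smul]
  refine Finset.sum_congr rfl fun i _ => ?_
  field_simp

end GradientCalculus

/-- `ξ` is a stationary point of the Hopfield energy
`E(ξ) = ½·⟨ξ,ξ⟩ − β⁻¹·log(∑ᵢ exp(β·⟨xᵢ,ξ⟩))` (i.e. `∇E(ξ) = 0`) iff `ξ` is a
fixed point of the Hopfield update rule `ξ = ∑ᵢ softmax(β·Xᵀξ)ᵢ • xᵢ`. -/
theorem hopfield_stationary_iff_fixed_point
    (N d : ℕ) (hN : 1 ≤ N) (β : ℝ) (hβ : 0 < β)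
    (x : Fin N → EuclideanSpace ℝ (Fin d))
    (E : EuclideanSpace ℝ (Fin d) → ℝ)
    (hE : E = fun ξ =>
      (1 / 2) * ⟪ξ, ξ⟫ - β⁻¹ * Real.log (∑ i, Real.exp (β * ⟪x i, ξ⟫))) :
    ∀ ξ : EuclideanSpace ℝ (Fin d),
      gradient E ξ = 0 ↔
        ξ = ∑ i, (Real.exp (β * ⟪x i, ξ⟫) /
          ∑ m, Real.exp (β * ⟪x m, ξ⟫)) • x i := by
  intro ξ
  have : NeZero N := ⟨by omega⟩
  have hgrad := (hasGradientAt_half_inner_self ξ).sub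
    (hasGradientAt_inv_mul_log_sum_exp_inner x hβ.ne' ξ)
  rw [hE, hgrad.gradient, sub_eq_zero]
end
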